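/- arXiv:2602.06188 — 2 statements merged into one kernel-verified Lean document; each statement's English description precedes it below -/
import Mathlib

section
/- Let θ₁ and θ₂ be permutable congruences on the Płonka sum A of a semilattice direct system of groups, i.e. θ₁ ∘ θ₂ = θ₂ ∘ θ₁ where ∘ is relational composition. Then: (i) S_{θ₁ ∘ θ₂} ⊆ S_{θ₁} ∘ S_{θ₂}; (ii) C_{θ₁} ∘ C_{θ₂} ⊆ C_{θ₁ ∘ θ₂}; (iii) for every i ∈ I and a, c ∈ G i: (a,c) ∈ (θ₁ ∘ θ₂)_{ii} if and only if there exist j ∈ I with (i,j) ∈ S_{θ₁} and (i,j) ∈ S_{θ₂}, and b ∈ G j such that (a,b) ∈ (θ₁)_{ij} and (b,c) ∈ (θ₂)_{ji}. -/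
/-! Płonka sum of a semilattice direct system of groups.

`I` is a join-semilattice, `G i` are groups, and `p i j h : G i →* G j` (for `h : i ≤ j`)
are the transition homomorphisms. The Płonka sum is the sigma type `Σ i, G i` with
multiplication `⟨i,a⟩·⟨j,b⟩ = ⟨i⊔j, p_{i,i⊔j}(a) · p_{j,i⊔j}(b)⟩` and inversion
`⟨i,a⟩⁻¹ = ⟨i,a⁻¹⟩` (a Clifford semigroup). -/

variable {I : Type*} [SemilatticeSup I] {G : I → Type*} [∀ i, Group (G i)]

/-- Multiplication of the Płonka sum. -/
def pmul (p : ∀ i j : I, i ≤ j → (G i →* G j)) (x y : Σ i, G i) : Σ i, G i :=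
  ⟨x.1 ⊔ y.1, p x.1 (x.1 ⊔ y.1) le_sup_left x.2 * p y.1 (x.1 ⊔ y.1) le_sup_right y.2⟩

/-- Inversion of the Płonka sum. -/
def pinv (x : Σ i, G i) : Σ i, G i := ⟨x.1, x.2⁻¹⟩

/-- `θ` is a congruence on the Płonka sum: an equivalence relation compatible with
multiplication and inversion. -/
def IsCong (p : ∀ i j : I, i ≤ j → (G i →* G j))
    (θ : (Σ i, G i) → (Σ i, G i) → Prop) : Prop :=
  Equivalence θ ∧
    (∀ x x' y y', θ x x' → θ y y' → θ (pmul p x y) (pmul p x' y')) ∧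
    (∀ x x', θ x x' → θ (pinv x) (pinv x'))

/-- `S_θ`: the pairs of indices related by `θ`. -/
def Srel (θ : (Σ i, G i) → (Σ i, G i) → Prop) (i j : I) : Prop :=
  ∃ (a : G i) (b : G j), θ ⟨i, a⟩ ⟨j, b⟩

/-- `C_θ`. -/
def Crel (θ : (Σ i, G i) → (Σ i, G i) → Prop) (i j : I) : Prop :=
  Srel θ i (i ⊔ j) ∧ Srel θ j (i ⊔ j)

/-- A semilattice congruence on `I`: an equivalence relation compatible with `⊔`. -/
def IsSemilatticeCong {I : Type*} [SemilatticeSup I] (C : I → I → Prop) : Prop :=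
  Equivalence C ∧ ∀ i₁ j₁ i₂ j₂, C i₁ j₁ → C i₂ j₂ → C (i₁ ⊔ i₂) (j₁ ⊔ j₂)

/-! Since `⟨i, a⟩ · ⟨i, a⟩⁻¹ = ⟨i, 1⟩`, a congruence relating `⟨i, a⟩` and `⟨j, b⟩` also relates
the identities `⟨i, 1⟩` and `⟨j, 1⟩`; hence `S_θ` is the kernel of `θ` on identities, which is
a semilattice congruence on `I`, and `C_θ = S_θ`. Part (ii) is then index arithmetic: from
`S_{θ₁} i k` and `S_{θ₂} k j` the identity at `i ⊔ k` links `i` to `i ⊔ j` through `θ₁ ∘ θ₂`, and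
the identity at `k ⊔ j` links `j` to `i ⊔ j` through `θ₂ ∘ θ₁`, which is `θ₁ ∘ θ₂` by
permutability. -/

namespace IsSemilatticeCong

variable {C C₁ C₂ : I → I → Prop}

theorem sup_left (hC : IsSemilatticeCong C) (k : I) {i j : I} (h : C i j) :
    C (k ⊔ i) (k ⊔ j) :=
  hC.2 _ _ _ _ (hC.1.refl k) h

theorem rel_iff_rel_sup (hC : IsSemilatticeCong C) {i j : I} :
    C i j ↔ C i (i ⊔ j) ∧ C j (i ⊔ j) := by
  refine ⟨fun h => ⟨?_, ?_⟩, fun ⟨hi, hj⟩ => hC.1.trans hi (hC.1.symm hj)⟩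
  · simpa using hC.sup_left i h
  · simpa using hC.1.symm (hC.2 _ _ _ _ h (hC.1.refl j))

theorem comp_sup (hC₁ : IsSemilatticeCong C₁) (hC₂ : IsSemilatticeCong C₂) {i j k : I}
    (h₁ : C₁ i k) (h₂ : C₂ k j) : Relation.Comp C₁ C₂ i (i ⊔ j) :=
  ⟨i ⊔ k, by simpa using hC₁.sup_left i h₁, hC₂.sup_left i h₂⟩

end IsSemilatticeCong

section PlonkaSum

theorem pmul_one_one (p : ∀ i j : I, i ≤ j → (G i →* G j)) (i j : I) :
    pmul p ⟨i, 1⟩ ⟨j, 1⟩ = ⟨i ⊔ j, 1⟩ := by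
  simp [pmul]

theorem pmul_pinv_self (p : ∀ i j : I, i ≤ j → (G i →* G j)) (i : I) (a : G i) :
    pmul p ⟨i, a⟩ (pinv ⟨i, a⟩) = ⟨i ⊔ i, 1⟩ := by
  show (⟨i ⊔ i, p i (i ⊔ i) le_sup_left a * p i (i ⊔ i) le_sup_right a⁻¹⟩ : Σ i, G i) = _
  rw [map_inv]
  exact congrArg _ (mul_inv_cancel _)

variable {θ θ₁ θ₂ : (Σ i, G i) → (Σ i, G i) → Prop}

omit [SemilatticeSup I] [∀ i, Group (G i)] in
theorem comp_srel_of_srel_comp {r s : (Σ i, G i) → (Σ i, G i) → Prop} {i j : I} :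
    Srel (Relation.Comp r s) i j → Relation.Comp (Srel r) (Srel s) i j := by
  rintro ⟨a, b, ⟨k, c⟩, hr, hs⟩
  exact ⟨k, ⟨a, c, hr⟩, ⟨c, b, hs⟩⟩

omit [SemilatticeSup I] [∀ i, Group (G i)] in
theorem comp_mk_iff_exists_srel (hθ₂ : Std.Symm θ₂) {i : I} {a c : G i} :
    Relation.Comp θ₁ θ₂ ⟨i, a⟩ ⟨i, c⟩ ↔
      ∃ j : I, Srel θ₁ i j ∧ Srel θ₂ i j ∧
        ∃ b : G j, θ₁ ⟨i, a⟩ ⟨j, b⟩ ∧ θ₂ ⟨j, b⟩ ⟨i, c⟩ := by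
  constructor
  · rintro ⟨⟨j, b⟩, h₁, h₂⟩
    exact ⟨j, ⟨a, b, h₁⟩, ⟨c, b, hθ₂.symm _ _ h₂⟩, b, h₁, h₂⟩
  · rintro ⟨j, -, -, b, h₁, h₂⟩
    exact ⟨⟨j, b⟩, h₁, h₂⟩

namespace IsCong

variable {p : ∀ i j : I, i ≤ j → (G i →* G j)}

theorem rel_one_one (hθ : IsCong p θ) {i j : I} {a : G i} {b : G j} (h : θ ⟨i, a⟩ ⟨j, b⟩) :
    θ ⟨i, 1⟩ ⟨j, 1⟩ := by
  have h' := hθ.2.1 _ _ _ _ h (hθ.2.2 _ _ h)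
  rwa [pmul_pinv_self, pmul_pinv_self, sup_idem, sup_idem] at h'

theorem srel_iff (hθ : IsCong p θ) {i j : I} : Srel θ i j ↔ θ ⟨i, 1⟩ ⟨j, 1⟩ :=
  ⟨fun ⟨_, _, h⟩ => hθ.rel_one_one h, fun h => ⟨1, 1, h⟩⟩

theorem isSemilatticeCong_srel (hθ : IsCong p θ) : IsSemilatticeCong (Srel θ) := by
  refine ⟨⟨fun i => ⟨1, 1, hθ.1.refl _⟩, fun ⟨a, b, h⟩ => ⟨b, a, hθ.1.symm h⟩, ?_⟩, ?_⟩
  · intro i j k hij hjk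
    rw [hθ.srel_iff] at hij hjk ⊢
    exact hθ.1.trans hij hjk
  · intro i₁ j₁ i₂ j₂ h₁ h₂
    rw [hθ.srel_iff] at h₁ h₂ ⊢
    simpa only [pmul_one_one] using hθ.2.1 _ _ _ _ h₁ h₂

theorem crel_iff_srel (hθ : IsCong p θ) {i j : I} : Crel θ i j ↔ Srel θ i j :=
  hθ.isSemilatticeCong_srel.rel_iff_rel_sup.symm

theorem srel_comp_of_comp_srel (hθ₁ : IsCong p θ₁) (hθ₂ : IsCong p θ₂) {i j : I} :
    Relation.Comp (Srel θ₁) (Srel θ₂) i j → Srel (Relation.Comp θ₁ θ₂) i j := by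
  rintro ⟨k, h₁, h₂⟩
  exact ⟨1, 1, ⟨k, 1⟩, hθ₁.srel_iff.1 h₁, hθ₂.srel_iff.1 h₂⟩

end IsCong

end PlonkaSum

theorem composition_of_permutable_congruences_general
    (p : ∀ i j : I, i ≤ j → (G i →* G j))
    (θ₁ θ₂ : (Σ i, G i) → (Σ i, G i) → Prop)
    (hθ₁ : IsCong p θ₁) (hθ₂ : IsCong p θ₂)
    (hperm : ∀ x y : Σ i, G i, Relation.Comp θ₁ θ₂ x y ↔ Relation.Comp θ₂ θ₁ x y) :
    -- (i)
    (∀ i j : I, Srel (Relation.Comp θ₁ θ₂) i j → Relation.Comp (Srel θ₁) (Srel θ₂) i j) ∧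
    -- (ii)
    (∀ i j : I, Relation.Comp (Crel θ₁) (Crel θ₂) i j → Crel (Relation.Comp θ₁ θ₂) i j) ∧
    -- (iii)
    (∀ (i : I) (a c : G i),
      Relation.Comp θ₁ θ₂ ⟨i, a⟩ ⟨i, c⟩ ↔
        ∃ j : I, Srel θ₁ i j ∧ Srel θ₂ i j ∧
          ∃ b : G j, θ₁ ⟨i, a⟩ ⟨j, b⟩ ∧ θ₂ ⟨j, b⟩ ⟨i, c⟩) := by
  refine ⟨fun _ _ => comp_srel_of_srel_comp, ?_,
    fun _ _ _ => comp_mk_iff_exists_srel ⟨fun _ _ h => hθ₂.1.symm h⟩⟩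
  rintro i j ⟨k, h₁, h₂⟩
  rw [hθ₁.crel_iff_srel] at h₁
  rw [hθ₂.crel_iff_srel] at h₂
  have hS₁ := hθ₁.isSemilatticeCong_srel
  have hS₂ := hθ₂.isSemilatticeCong_srel
  have hcomm : Relation.Comp θ₁ θ₂ = Relation.Comp θ₂ θ₁ :=
    funext₂ fun x y => propext (hperm x y)
  refine ⟨hθ₁.srel_comp_of_comp_srel hθ₂ (hS₁.comp_sup hS₂ h₁ h₂), ?_⟩
  rw [hcomm, sup_comm]
  exact hθ₂.srel_comp_of_comp_srel hθ₁ (hS₂.comp_sup hS₁ (hS₂.1.symm h₂) (hS₁.1.symm h₁))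

/-- For permutable congruences `θ₁, θ₂` on the Płonka sum of a semilattice direct system
of groups: (i) `S_{θ₁ ∘ θ₂} ⊆ S_{θ₁} ∘ S_{θ₂}`; (ii) `C_{θ₁} ∘ C_{θ₂} ⊆ C_{θ₁ ∘ θ₂}`;
(iii) the pure fibers of `θ₁ ∘ θ₂` are unions of composites of mixed fibers over indices
`j` with `(i,j) ∈ S_{θ₁} ∩ S_{θ₂}`. -/
theorem composition_of_permutable_congruences
    (p : ∀ i j : I, i ≤ j → (G i →* G j))
    (hid : ∀ (i : I) (h : i ≤ i) (a : G i), p i i h a = a)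
    (hcomp : ∀ (i j k : I) (hij : i ≤ j) (hjk : j ≤ k) (a : G i),
      p j k hjk (p i j hij a) = p i k (hij.trans hjk) a)
    (θ₁ θ₂ : (Σ i, G i) → (Σ i, G i) → Prop)
    (hθ₁ : IsCong p θ₁) (hθ₂ : IsCong p θ₂)
    (hperm : ∀ x y : Σ i, G i, Relation.Comp θ₁ θ₂ x y ↔ Relation.Comp θ₂ θ₁ x y) :
    -- (i)
    (∀ i j : I, Srel (Relation.Comp θ₁ θ₂) i j → Relation.Comp (Srel θ₁) (Srel θ₂) i j) ∧
    -- (ii)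
    (∀ i j : I, Relation.Comp (Crel θ₁) (Crel θ₂) i j → Crel (Relation.Comp θ₁ θ₂) i j) ∧
    -- (iii)
    (∀ (i : I) (a c : G i),
      Relation.Comp θ₁ θ₂ ⟨i, a⟩ ⟨i, c⟩ ↔
        ∃ j : I, Srel θ₁ i j ∧ Srel θ₂ i j ∧
          ∃ b : G j, θ₁ ⟨i, a⟩ ⟨j, b⟩ ∧ θ₂ ⟨j, b⟩ ⟨i, c⟩) :=
  composition_of_permutable_congruences_general p θ₁ θ₂ hθ₁ hθ₂ hperm
end

section
/- Let θ₁ and θ₂ be congruences on the Płonka sum A of a semilattice direct system of groups. Then the following are equivalent: (1) (θ₁, θ₂) is a pair of factor congruences on A, i.e. θ₁ ∩ θ₂ is the diagonal of A and θ₁ ∘ θ₂ = θ₂ ∘ θ₁ = A × A; (2) θ₁ ∘ θ₂ = θ₂ ∘ θ₁, the pair (C_{θ₁}, C_{θ₂}) is a pair of factor congruences on the semilattice I (i.e. C_{θ₁} ∩ C_{θ₂} is the diagonal of I and C_{θ₁} ∘ C_{θ₂} = C_{θ₂} ∘ C_{θ₁} = I × I), and for every i ∈ I the pair ((θ₁)_{ii},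 (θ₂)_{ii}) is a pair of factor congruences on the group G i (i.e. their intersection is the diagonal of G i and their compositions in either order equal G i × G i). -/
/-! Płonka sum of a semilattice direct system of groups.

`I` is a join-semilattice, `G i` are groups, and `p i j h : G i →* G j` (for `h : i ≤ j`)
are the transition homomorphisms. The Płonka sum is the sigma type `Σ i, G i` with
multiplication `⟨i,a⟩·⟨j,b⟩ = ⟨i⊔j, p_{i,i⊔j}(a) · p_{j,i⊔j}(b)⟩` and inversion
`⟨i,a⟩⁻¹ = ⟨i,a⁻¹⟩` (a Clifford semigroup). -/

variable {I : Type*} [SemilatticeSup I] {G : I → Type*} [∀ i, Group (G i)]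

/-! The idempotents `⟨i, 1⟩` embed `I` into the Płonka sum, and a congruence `θ` relates
`⟨i, 1⟩` and `⟨j, 1⟩` exactly when `C_θ i j`; moreover `θ x y` forces
`θ ⟨x.1, 1⟩ ⟨y.1, 1⟩` (multiply by the inverses). So a factor pair on the sum restricts
to factor pairs on the idempotents (i.e. on `I`) and on each fibre `G i`: if
`⟨i, a⟩ θ₁ z θ₂ ⟨i, b⟩`, multiplying by `⟨i, 1⟩` moves `z` to a fibre over some `m ≥ i`
with `C_{θ₁} i m` and `C_{θ₂} m i`, hence `m = i`. Conversely, given `k` with `C_{θ₁} i k` and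
`C_{θ₂} k j`, both `⟨i, a⟩` and `⟨j, b⟩` can be moved up along the transition maps to the
fibre over `i ⊔ j ⊔ k`, where the fibre factor pair connects them; permutability makes
`θ₁ ∘ θ₂` transitive, which glues the pieces together. -/

theorem Relation.isTrans_comp_of_comm {α : Type*} {r s : α → α → Prop}
    [IsTrans α r] [IsTrans α s] (hrs : ∀ x y, Relation.Comp s r x y → Relation.Comp r s x y) :
    IsTrans α (Relation.Comp r s) := by
  refine ⟨fun x y z hxy hyz => ?_⟩
  obtain ⟨u, hxu, huy⟩ := hxy
  obtain ⟨v, hyv, hvz⟩ := hyz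
  obtain ⟨w, huw, hwv⟩ := hrs u v ⟨y, huy, hyv⟩
  exact ⟨w, _root_.trans hxu huw, _root_.trans hwv hvz⟩

def IsFactorPair {α : Type*} (r s : α → α → Prop) : Prop :=
  (∀ x y, (r x y ∧ s x y) ↔ x = y) ∧ (∀ x y, Relation.Comp r s x y) ∧
    (∀ x y, Relation.Comp s r x y)

theorem IsFactorPair.symm {α : Type*} {r s : α → α → Prop} (h : IsFactorPair r s) :
    IsFactorPair s r :=
  ⟨fun x y => and_comm.trans (h.1 x y), h.2.2, h.2.1⟩

/-- The paper's `θ_{ii}`. -/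
def fiber (θ : (Σ i, G i) → (Σ i, G i) → Prop) (i : I) (a b : G i) : Prop :=
  θ ⟨i, a⟩ ⟨i, b⟩

def pone (i : I) : Σ i, G i := ⟨i, 1⟩

omit [SemilatticeSup I] in
theorem pone_injective : Function.Injective (pone : I → Σ i, G i) :=
  fun _ _ h => congrArg Sigma.fst h

section Plonka

variable (p : ∀ i j : I, i ≤ j → (G i →* G j))

theorem pmul_pone_pone (i j : I) : pmul p (pone i) (pone j) = pone (i ⊔ j) := by
  rw [pmul, pone, pone, map_one, map_one, mul_one]; rfl

theorem pmul_pone_mk {i : I} (j : I) (a : G i) :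
    pmul p (pone j) ⟨i, a⟩ = ⟨j ⊔ i, p i (j ⊔ i) le_sup_right a⟩ := by
  rw [pmul, pone, map_one, one_mul]

theorem mk_map_congr {i j k : I} (hij : i ≤ j) (hik : i ≤ k) (hjk : j = k) (a : G i) :
    (⟨j, p i j hij a⟩ : Σ i, G i) = ⟨k, p i k hik a⟩ := by
  subst hjk; rfl

variable {p} (hid : ∀ (i : I) (h : i ≤ i) (a : G i), p i i h a = a)
include hid

theorem mk_map_sup_self {i : I} (a : G i) :
    (⟨i ⊔ i, p i (i ⊔ i) le_sup_left a⟩ : Σ i, G i) = ⟨i, a⟩ := by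
  rw [mk_map_congr p le_sup_left le_rfl (sup_idem i), hid]

theorem pmul_pinv_self_s18 (x : Σ i, G i) : pmul p x (pinv x) = pone x.1 := by
  obtain ⟨i, a⟩ := x
  rw [pmul, pinv, ← map_mul, mul_inv_cancel]
  exact mk_map_sup_self hid 1

theorem pmul_mk_pone_self {i : I} (a : G i) : pmul p ⟨i, a⟩ (pone i) = ⟨i, a⟩ := by
  rw [pmul, pone, map_one, mul_one]
  exact mk_map_sup_self hid a

end Plonka

namespace IsCong

variable {p : ∀ i j : I, i ≤ j → (G i →* G j)} {θ : (Σ i, G i) → (Σ i, G i) → Prop}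
  (hθ : IsCong p θ)
include hθ

theorem pone_sup_left {i j : I} (h : θ (pone i) (pone j)) (k : I) :
    θ (pone (k ⊔ i)) (pone (k ⊔ j)) := by
  simpa only [pmul_pone_pone] using hθ.2.1 _ _ _ _ (hθ.1.refl (pone k)) h

variable (hid : ∀ (i : I) (h : i ≤ i) (a : G i), p i i h a = a)
include hid

theorem pone_fst {x y : Σ i, G i} (h : θ x y) : θ (pone x.1) (pone y.1) := by
  simpa only [pmul_pinv_self_s18 hid] using hθ.2.1 _ _ _ _ h (hθ.2.2 x y h)

theorem mk_map {i s : I} (his : i ≤ s) (h : θ (pone i) (pone s)) (a : G i) :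
    θ ⟨i, a⟩ ⟨s, p i s his a⟩ := by
  have h' := hθ.2.1 _ _ _ _ h (hθ.1.refl ⟨i, a⟩)
  rwa [pmul_pone_mk, pmul_pone_mk, mk_map_sup_self hid,
    mk_map_congr p le_sup_right his (sup_eq_left.mpr his)] at h'

theorem crel_iff (i j : I) : Crel θ i j ↔ θ (pone i) (pone j) := by
  constructor
  · rintro ⟨⟨a, b, hab⟩, ⟨c, d, hcd⟩⟩
    exact hθ.1.trans (hθ.pone_fst hid hab) (hθ.1.symm (hθ.pone_fst hid hcd))
  · intro h
    have hi : θ (pone (i ⊔ i)) (pone (i ⊔ j)) := hθ.pone_sup_left h i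
    have hj : θ (pone (j ⊔ j)) (pone (j ⊔ i)) := hθ.pone_sup_left (hθ.1.symm h) j
    rw [sup_idem] at hi hj
    rw [sup_comm] at hj
    exact ⟨⟨1, 1, hi⟩, ⟨1, 1, hj⟩⟩

end IsCong

section FactorPairs

variable {p : ∀ i j : I, i ≤ j → (G i →* G j)}
  (hid : ∀ (i : I) (h : i ≤ i) (a : G i), p i i h a = a)
  {θ₁ θ₂ : (Σ i, G i) → (Σ i, G i) → Prop} (hθ₁ : IsCong p θ₁) (hθ₂ : IsCong p θ₂)
include hid hθ₁ hθ₂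

theorem crel_comp_of_comp {i j : I} (h : Relation.Comp θ₁ θ₂ (pone i) (pone j)) :
    Relation.Comp (Crel θ₁) (Crel θ₂) i j := by
  obtain ⟨z, hiz, hzj⟩ := h
  exact ⟨z.1, (hθ₁.crel_iff hid _ _).mpr (hθ₁.pone_fst hid hiz),
    (hθ₂.crel_iff hid _ _).mpr (hθ₂.pone_fst hid hzj)⟩

theorem isFactorPair_crel (h : IsFactorPair θ₁ θ₂) : IsFactorPair (Crel θ₁) (Crel θ₂) := by
  refine ⟨fun i j => ?_, fun i j => crel_comp_of_comp hid hθ₁ hθ₂ (h.2.1 _ _),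
    fun i j => crel_comp_of_comp hid hθ₂ hθ₁ (h.2.2 _ _)⟩
  rw [hθ₁.crel_iff hid, hθ₂.crel_iff hid, h.1, pone_injective.eq_iff]

theorem fiber_comp_of_comp (hC : ∀ i j, Crel θ₁ i j ∧ Crel θ₂ i j → i = j) {i : I}
    {a b : G i} (h : Relation.Comp θ₁ θ₂ ⟨i, a⟩ ⟨i, b⟩) :
    Relation.Comp (fiber θ₁ i) (fiber θ₂ i) a b := by
  obtain ⟨z, haz, hzb⟩ := h
  have haz' := hθ₁.2.1 _ _ _ _ haz (hθ₁.1.refl (pone i))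
  have hzb' := hθ₂.2.1 _ _ _ _ hzb (hθ₂.1.refl (pone i))
  rw [pmul_mk_pone_self hid] at haz' hzb'
  generalize pmul p z (pone i) = w at haz' hzb'
  obtain ⟨m, c⟩ := w
  have hm : i = m := hC i m ⟨(hθ₁.crel_iff hid i m).mpr (hθ₁.pone_fst hid haz'),
    (hθ₂.crel_iff hid i m).mpr (hθ₂.1.symm (hθ₂.pone_fst hid hzb'))⟩
  subst hm
  exact ⟨c, haz', hzb'⟩

theorem isFactorPair_fiber (h : IsFactorPair θ₁ θ₂) (i : I) :
    IsFactorPair (fiber θ₁ i) (fiber θ₂ i) := by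
  have hC := isFactorPair_crel hid hθ₁ hθ₂ h
  refine ⟨fun a b => (h.1 _ _).trans sigma_mk_injective.eq_iff,
    fun a b => fiber_comp_of_comp hid hθ₁ hθ₂ (fun i j => (hC.1 i j).mp) (h.2.1 _ _),
    fun a b => fiber_comp_of_comp hid hθ₂ hθ₁ (fun i j => (hC.symm.1 i j).mp) (h.2.2 _ _)⟩

theorem comp_of_crel_comp_of_fiber_comp
    (hperm : ∀ x y, Relation.Comp θ₂ θ₁ x y → Relation.Comp θ₁ θ₂ x y)
    (hC : ∀ i j, Relation.Comp (Crel θ₁) (Crel θ₂) i j)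
    (hF : ∀ i a b, Relation.Comp (fiber θ₁ i) (fiber θ₂ i) a b) (x y : Σ i, G i) :
    Relation.Comp θ₁ θ₂ x y := by
  obtain ⟨i, a⟩ := x
  obtain ⟨j, b⟩ := y
  obtain ⟨k, hik, hkj⟩ := hC i j
  rw [hθ₁.crel_iff hid] at hik
  rw [hθ₂.crel_iff hid] at hkj
  have hi : θ₁ (pone i) (pone (i ⊔ k)) := by
    convert hθ₁.pone_sup_left hik i using 2; ac_rfl
  have his : θ₂ (pone (i ⊔ k)) (pone (i ⊔ k ⊔ j)) := by
    convert hθ₂.pone_sup_left hkj (i ⊔ k) using 2; ac_rfl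
  have hj : θ₂ (pone j) (pone (j ⊔ k)) := by
    convert hθ₂.pone_sup_left (hθ₂.1.symm hkj) j using 2; ac_rfl
  have hjs : θ₁ (pone (j ⊔ k)) (pone (i ⊔ k ⊔ j)) := by
    convert hθ₁.pone_sup_left (hθ₁.1.symm hik) (j ⊔ k) using 2 <;> ac_rfl
  have hs₁ : i ⊔ k ≤ i ⊔ k ⊔ j := le_sup_left
  have hs₂ : j ⊔ k ≤ i ⊔ k ⊔ j := by simp [le_sup_right.trans le_sup_left]
  have up_a := hθ₂.mk_map hid hs₁ his (p i (i ⊔ k) le_sup_left a)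
  have up_b := hθ₁.mk_map hid hs₂ hjs (p j (j ⊔ k) le_sup_left b)
  have a_up : Relation.Comp θ₁ θ₂ ⟨i, a⟩ _ := ⟨_, hθ₁.mk_map hid le_sup_left hi a, up_a⟩
  have b_up : Relation.Comp θ₁ θ₂ _ ⟨j, b⟩ :=
    ⟨_, hθ₁.1.symm up_b, hθ₂.1.symm (hθ₂.mk_map hid le_sup_left hj b)⟩
  obtain ⟨c, hac, hcb⟩ := hF (i ⊔ k ⊔ j) _ _
  have := hθ₁.1.isTrans
  have := hθ₂.1.isTrans
  have := Relation.isTrans_comp_of_comm hperm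
  exact _root_.trans (_root_.trans a_up ⟨⟨_, c⟩, hac, hcb⟩) b_up

theorem isFactorPair_of_crel_of_fiber
    (hperm : ∀ x y, Relation.Comp θ₁ θ₂ x y ↔ Relation.Comp θ₂ θ₁ x y)
    (hC : IsFactorPair (Crel θ₁) (Crel θ₂)) (hF : ∀ i, IsFactorPair (fiber θ₁ i) (fiber θ₂ i)) :
    IsFactorPair θ₁ θ₂ := by
  refine ⟨fun x y => ⟨fun ⟨h₁, h₂⟩ => ?_, fun hxy => hxy ▸ ⟨hθ₁.1.refl x, hθ₂.1.refl x⟩⟩,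
    comp_of_crel_comp_of_fiber_comp hid hθ₁ hθ₂ (fun x y => (hperm x y).mpr) hC.2.1
      (fun i => (hF i).2.1),
    comp_of_crel_comp_of_fiber_comp hid hθ₂ hθ₁ (fun x y => (hperm x y).mp) hC.2.2
      (fun i => (hF i).2.2)⟩
  obtain ⟨i, a⟩ := x
  obtain ⟨j, b⟩ := y
  obtain rfl : i = j := (hC.1 i j).mp ⟨(hθ₁.crel_iff hid i j).mpr (hθ₁.pone_fst hid h₁),
    (hθ₂.crel_iff hid i j).mpr (hθ₂.pone_fst hid h₂)⟩
  rw [((hF i).1 a b).mp ⟨h₁, h₂⟩]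

end FactorPairs

theorem factor_congruences_characterization_general
    (p : ∀ i j : I, i ≤ j → (G i →* G j))
    (hid : ∀ (i : I) (h : i ≤ i) (a : G i), p i i h a = a)
    (θ₁ θ₂ : (Σ i, G i) → (Σ i, G i) → Prop)
    (hθ₁ : IsCong p θ₁) (hθ₂ : IsCong p θ₂) :
    -- (1): (θ₁, θ₂) is a pair of factor congruences on the Płonka sum
    ((∀ x y : Σ i, G i, (θ₁ x y ∧ θ₂ x y) ↔ x = y) ∧
      (∀ x y : Σ i, G i, Relation.Comp θ₁ θ₂ x y) ∧
      (∀ x y : Σ i, G i, Relation.Comp θ₂ θ₁ x y))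
    ↔
    -- (2): θ₁, θ₂ permute, (C_{θ₁}, C_{θ₂}) is a pair of factor congruences on I, and
    -- each ((θ₁)_{ii}, (θ₂)_{ii}) is a pair of factor congruences on G i
    ((∀ x y : Σ i, G i, Relation.Comp θ₁ θ₂ x y ↔ Relation.Comp θ₂ θ₁ x y) ∧
      ((∀ i j : I, (Crel θ₁ i j ∧ Crel θ₂ i j) ↔ i = j) ∧
        (∀ i j : I, Relation.Comp (Crel θ₁) (Crel θ₂) i j) ∧
        (∀ i j : I, Relation.Comp (Crel θ₂) (Crel θ₁) i j)) ∧
      (∀ i : I,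
        (∀ a b : G i, (θ₁ ⟨i, a⟩ ⟨i, b⟩ ∧ θ₂ ⟨i, a⟩ ⟨i, b⟩) ↔ a = b) ∧
        (∀ a b : G i, Relation.Comp (fun a' b' : G i => θ₁ ⟨i, a'⟩ ⟨i, b'⟩)
          (fun a' b' : G i => θ₂ ⟨i, a'⟩ ⟨i, b'⟩) a b) ∧
        (∀ a b : G i, Relation.Comp (fun a' b' : G i => θ₂ ⟨i, a'⟩ ⟨i, b'⟩)
          (fun a' b' : G i => θ₁ ⟨i, a'⟩ ⟨i, b'⟩) a b))) := by
  show IsFactorPair θ₁ θ₂ ↔ (∀ x y, Relation.Comp θ₁ θ₂ x y ↔ Relation.Comp θ₂ θ₁ x y) ∧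
    IsFactorPair (Crel θ₁) (Crel θ₂) ∧ ∀ i, IsFactorPair (fiber θ₁ i) (fiber θ₂ i)
  constructor
  · intro h
    exact ⟨fun x y => iff_of_true (h.2.1 x y) (h.2.2 x y),
      isFactorPair_crel hid hθ₁ hθ₂ h, isFactorPair_fiber hid hθ₁ hθ₂ h⟩
  · rintro ⟨hperm, hC, hF⟩
    exact isFactorPair_of_crel_of_fiber hid hθ₁ hθ₂ hperm hC hF

/-- Characterization of factor congruences on the Płonka sum of a semilattice direct
system of groups: `(θ₁, θ₂)` is a pair of factor congruences on `A` iff `θ₁`, `θ₂`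
permute, `(C_{θ₁}, C_{θ₂})` is a pair of factor congruences on the semilattice `I`, and
for every `i` the pure fibers `((θ₁)_{ii}, (θ₂)_{ii})` are a pair of factor congruences
on the group `G i`. -/
theorem factor_congruences_characterization
    (p : ∀ i j : I, i ≤ j → (G i →* G j))
    (hid : ∀ (i : I) (h : i ≤ i) (a : G i), p i i h a = a)
    (hcomp : ∀ (i j k : I) (hij : i ≤ j) (hjk : j ≤ k) (a : G i),
      p j k hjk (p i j hij a) = p i k (hij.trans hjk) a)
    (θ₁ θ₂ : (Σ i, G i) → (Σ i, G i) → Prop)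
    (hθ₁ : IsCong p θ₁) (hθ₂ : IsCong p θ₂) :
    -- (1): (θ₁, θ₂) is a pair of factor congruences on the Płonka sum
    ((∀ x y : Σ i, G i, (θ₁ x y ∧ θ₂ x y) ↔ x = y) ∧
      (∀ x y : Σ i, G i, Relation.Comp θ₁ θ₂ x y) ∧
      (∀ x y : Σ i, G i, Relation.Comp θ₂ θ₁ x y))
    ↔
    -- (2): θ₁, θ₂ permute, (C_{θ₁}, C_{θ₂}) is a pair of factor congruences on I, and
    -- each ((θ₁)_{ii}, (θ₂)_{ii}) is a pair of factor congruences on G i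
    ((∀ x y : Σ i, G i, Relation.Comp θ₁ θ₂ x y ↔ Relation.Comp θ₂ θ₁ x y) ∧
      ((∀ i j : I, (Crel θ₁ i j ∧ Crel θ₂ i j) ↔ i = j) ∧
        (∀ i j : I, Relation.Comp (Crel θ₁) (Crel θ₂) i j) ∧
        (∀ i j : I, Relation.Comp (Crel θ₂) (Crel θ₁) i j)) ∧
      (∀ i : I,
        (∀ a b : G i, (θ₁ ⟨i, a⟩ ⟨i, b⟩ ∧ θ₂ ⟨i, a⟩ ⟨i, b⟩) ↔ a = b) ∧
        (∀ a b : G i, Relation.Comp (fun a' b' : G i => θ₁ ⟨i, a'⟩ ⟨i, b'⟩)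
          (fun a' b' : G i => θ₂ ⟨i, a'⟩ ⟨i, b'⟩) a b) ∧
        (∀ a b : G i, Relation.Comp (fun a' b' : G i => θ₂ ⟨i, a'⟩ ⟨i, b'⟩)
          (fun a' b' : G i => θ₁ ⟨i, a'⟩ ⟨i, b'⟩) a b))) :=
  factor_congruences_characterization_general p hid θ₁ θ₂ hθ₁ hθ₂
end
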